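/- (Fourier slice theorem) For f ∈ 𝒮(ℝⁿ), τ ∈ ℝ, and ξ ∈ S^{n-1}, the n-dimensional Fourier transform of f evaluated at τξ equals the 1-dimensional Fourier transform of the tomogram f^♯_ξ evaluated at τ: f̂(τξ) = (f^♯_ξ)^(τ). -/

import Mathlib

/-!
For a unit vector `ξ`, the map `(t, y) ↦ t • ξ + y` is a linear isometry from the `L²` product
`ℝ × (ℝ ∙ ξ)ᗮ` onto the whole space, hence preserves Lebesgue measure. Along it the phase
`⟪τ • ξ, t • ξ + y⟫ = τ * t` depends on `t` only, so Fubini turns the `n`-dimensional Fourier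
integral into the one-dimensional Fourier integral of the hyperplane integrals `f^♯_ξ(t)`.
-/

open MeasureTheory Complex
open scoped RealInnerProductSpace

/-- The Radon tomogram of `f` along the unit vector `ξ` at signed distance `X`. -/
noncomputable def tomogram {n : ℕ} (f : EuclideanSpace ℝ (Fin n) → ℝ)
    (ξ : EuclideanSpace ℝ (Fin n)) (X : ℝ) : ℝ :=
  ∫ y : ((ℝ ∙ ξ)ᗮ : Submodule ℝ (EuclideanSpace ℝ (Fin n))),
    f (X • ξ + (y : EuclideanSpace ℝ (Fin n)))

section
variable {E : Type*} [NormedAddCommGroup E] [InnerProductSpace ℝ E] {ξ : E}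

noncomputable def LinearIsometryEquiv.prodOrthogonalSpanSingleton (hξ : ‖ξ‖ = 1) :
    WithLp 2 (ℝ × (ℝ ∙ ξ)ᗮ) ≃ₗᵢ[ℝ] E :=
  (LinearIsometryEquiv.withLpProdCongr 2 (LinearIsometryEquiv.toSpanUnitSingleton ξ hξ)
    (LinearIsometryEquiv.refl ℝ _)).trans (ℝ ∙ ξ).orthogonalDecomposition.symm

@[simp]
theorem LinearIsometryEquiv.prodOrthogonalSpanSingleton_toLp (hξ : ‖ξ‖ = 1)
    (t : ℝ) (y : (ℝ ∙ ξ)ᗮ) :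
    prodOrthogonalSpanSingleton hξ (WithLp.toLp 2 (t, y)) = t • ξ + y := by
  simp [prodOrthogonalSpanSingleton]

theorem inner_smul_smul_add_of_mem_orthogonal (hξ : ‖ξ‖ = 1) (τ t : ℝ) {y : E}
    (hy : y ∈ (ℝ ∙ ξ)ᗮ) : ⟪τ • ξ, t • ξ + y⟫ = τ * t := by
  rw [real_inner_smul_left, inner_add_right,
    Submodule.mem_orthogonal_singleton_iff_inner_right.1 hy, add_zero,
    real_inner_smul_right, real_inner_self_eq_norm_sq, hξ]
  ring

theorem integral_eq_integral_integral_smul_add_orthogonal [FiniteDimensional ℝ E]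
    [MeasurableSpace E] [BorelSpace E] {F : Type*} [NormedAddCommGroup F] [NormedSpace ℝ F]
    (hξ : ‖ξ‖ = 1) {g : E → F} (hg : Integrable g) :
    ∫ x, g x = ∫ t : ℝ, ∫ y : (ℝ ∙ ξ)ᗮ, g (t • ξ + y) := by
  set e := LinearIsometryEquiv.prodOrthogonalSpanSingleton hξ
  have hmp : MeasurePreserving (e ∘ WithLp.toLp 2) :=
    e.measurePreserving.comp (WithLp.volume_preserving_toLp ℝ _)
  have hemb : MeasurableEmbedding (e ∘ WithLp.toLp 2) :=
    e.toHomeomorph.measurableEmbedding.comp (MeasurableEquiv.toLp 2 _).measurableEmbedding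
  have hint : Integrable (g ∘ e ∘ WithLp.toLp 2) ((volume : Measure ℝ).prod volume) := by
    rw [← Measure.volume_eq_prod]
    exact (hmp.integrable_comp_emb hemb).2 hg
  rw [← hmp.integral_comp hemb, Measure.volume_eq_prod]
  exact (integral_prod _ hint).trans (by simp [e])
end

/-- Fourier slice theorem: `f̂(τξ) = (f^♯_ξ)^(τ)`, where
`f̂(k) = ∫ f(x) e^{-i k·x} dx` and `ĝ(τ) = ∫ g(X) e^{-i τ X} dX`. -/
theorem fourier_slice {n : ℕ} (f : SchwartzMap (EuclideanSpace ℝ (Fin n)) ℝ)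
    (τ : ℝ) (ξ : EuclideanSpace ℝ (Fin n)) (hξ : ‖ξ‖ = 1) :
    (∫ x : EuclideanSpace ℝ (Fin n), (f x : ℂ) * Complex.exp (-Complex.I * (⟪τ • ξ, x⟫ : ℝ)))
      = ∫ X : ℝ, (tomogram (fun x => f x) ξ X : ℂ) * Complex.exp (-Complex.I * (τ * X)) := by
  have hint : Integrable fun x => (f x : ℂ) * exp (-I * (⟪τ • ξ, x⟫ : ℝ)) :=
    (f.integrable.ofReal (𝕜 := ℂ)).mono (by fun_prop) (.of_forall fun x => by simp [norm_exp])
  rw [integral_eq_integral_integral_smul_add_orthogonal hξ hint]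
  refine integral_congr_ae (.of_forall fun t => ?_)
  simp only [inner_smul_smul_add_of_mem_orthogonal hξ τ t (Subtype.prop _)]
  rw [integral_mul_const, tomogram, integral_complex_ofReal, ofReal_mul]
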